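/- arXiv:2511.13631 — 3 statements merged into one kernel-verified Lean document; each statement's English description precedes it below -/
import Mathlib

section
/- Let R be a commutative ring, let t and r be units of R, and let s ∈ R satisfy s² = s·(r − t). Let M be an R-module, and define binary operations on M by x ◁ y = t•x + s•y and x ▷ y = r•x. Then (M, ◁, ▷) is a framed birack; that is: (i) (x◁x)▷(x▷x) = (x▷x)◁(x◁x) for all x ∈ M; (ii) for each x ∈ M the maps y ↦ y▷x and y ↦ y◁x are bijections of M, and the map S : M×M → M×M given by S(x,y) = (y▷x, x◁y) is a bijection; (iii) for all x, y, z ∈ M the exchange laws (x◁y)◁(z◁y) = (x◁z)◁(y▷z), (x◁y)▷(z◁y) = (x▷z)◁(y▷z), and (x▷y)▷(z▷y) = (x▷z)▷(y◁z) hold. -/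
/-!
All operations are linear, so each axiom is an identity between `R`-linear combinations of the
variables. Comparing coefficients, the framing condition (i) and the first exchange law both
reduce to `s² = s(r - t)`, the other exchange laws hold because `R` is commutative, and the
bijectivity conditions hold because `t` and `r` are units; after swapping the factors, `S` is a
shear `(a, b) ↦ (r • a, t • b + s • a)`.
-/

section Birack

variable {R M : Type*} [CommRing R] [AddCommGroup M] [Module R M]

theorem Units.bijective_smul_add (u : Rˣ) (c : M) :
    Function.Bijective fun y : M => (u : R) • y + c :=
  (Equiv.addRight c).bijective.comp (MulAction.bijective u)

theorem Units.bijective_smul_swap_smul_add_smul (t r : Rˣ) (s : R) :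
    Function.Bijective fun p : M × M => ((r : R) • p.2, (t : R) • p.1 + s • p.2) :=
  (Equiv.prodShear (Equiv.ofBijective _ (MulAction.bijective r)) fun a =>
    Equiv.ofBijective _ (Units.bijective_smul_add t (s • a))).bijective.comp
    (Equiv.prodComm M M).bijective

variable {t r s : R}

theorem birack_framing (hs : s ^ 2 = s * (r - t)) (x : M) :
    r • (t • x + s • x) = t • (r • x) + s • (t • x + s • x) := by
  linear_combination (norm := module) -hs • x

theorem birack_exchange_under (hs : s ^ 2 = s * (r - t)) (x y z : M) :
    t • (t • x + s • y) + s • (t • z + s • y) = t • (t • x + s • z) + s • (r • y) := by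
  linear_combination (norm := module) hs • y

theorem birack_exchange_mixed (x y : M) :
    r • (t • x + s • y) = t • (r • x) + s • (r • y) := by
  module

end Birack

/-- The `(t,s,r)`-birack structure on an `R`-module `M`, where `t, r` are units of the
commutative ring `R` and `s² = s(r - t)`, given by `x ◁ y = t•x + s•y` and `x ▷ y = r•x`,
is a framed birack: it satisfies (i) `(x◁x)▷(x▷x) = (x▷x)◁(x◁x)`; (ii) the maps
`y ↦ y▷x`, `y ↦ y◁x` and `S(x,y) = (y▷x, x◁y)` are bijections; (iii) the three
exchange laws. -/
theorem statement1 {R M : Type*} [CommRing R] [AddCommGroup M] [Module R M]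
    (t r : Rˣ) (s : R) (hs : s ^ 2 = s * ((r : R) - (t : R))) :
    let und : M → M → M := fun x y => (t : R) • x + s • y
    let ov : M → M → M := fun x y => (r : R) • x
    -- (i)
    (∀ x : M, ov (und x x) (ov x x) = und (ov x x) (und x x)) ∧
    -- (ii)
    (∀ x : M, Function.Bijective (fun y : M => ov y x)) ∧
    (∀ x : M, Function.Bijective (fun y : M => und y x)) ∧
    Function.Bijective (fun p : M × M => (ov p.2 p.1, und p.1 p.2)) ∧
    -- (iii) exchange laws
    (∀ x y z : M, und (und x y) (und z y) = und (und x z) (ov y z)) ∧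
    (∀ x y z : M, ov (und x y) (und z y) = und (ov x z) (ov y z)) ∧
    (∀ x y z : M, ov (ov x y) (ov z y) = ov (ov x z) (und y z)) :=
  ⟨birack_framing hs, fun _ => MulAction.bijective r, fun x => Units.bijective_smul_add t (s • x),
    Units.bijective_smul_swap_smul_add_smul t r s, birack_exchange_under hs,
    fun x y _ => birack_exchange_mixed x y, fun _ _ _ => rfl⟩
end

section
/- Let R be a commutative ring, let t and r be units of R, and let s ∈ R satisfy s² = s·(r − t). Let M be an R-module with operations x ◁ y = t•x + s•y and x ▷ y = r•x. Then for all x, y, z ∈ M, the first exchange law holds: (x◁y)◁(z◁y) = (x◁z)◁(y▷z); explicitly, t•(t•x + s•y) + s•(t•z + s•y) = t•(t•x + s•z) + s•(r•y). -/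
theorem birack_first_exchange {R M : Type*} [CommRing R] [AddCommGroup M] [Module R M]
    {t s r : R} (hs : s ^ 2 = s * (r - t)) (x y z : M) :
    t • (t • x + s • y) + s • (t • z + s • y) = t • (t • x + s • z) + s • (r • y) := by
  linear_combination (norm := module) hs • y

/-- The first exchange law for the `(t,s,r)`-birack structure `x ◁ y = t•x + s•y`,
`x ▷ y = r•x` on an `R`-module `M`: `(x◁y)◁(z◁y) = (x◁z)◁(y▷z)`; explicitly,
`t•(t•x + s•y) + s•(t•z + s•y) = t•(t•x + s•z) + s•(r•y)`. -/
theorem statement5 {R M : Type*} [CommRing R] [AddCommGroup M] [Module R M]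
    (t r : Rˣ) (s : R) (hs : s ^ 2 = s * ((r : R) - (t : R))) :
    let und : M → M → M := fun x y => (t : R) • x + s • y
    let ov : M → M → M := fun x y => (r : R) • x
    ∀ x y z : M, und (und x y) (und z y) = und (und x z) (ov y z) ∧
      (t : R) • ((t : R) • x + s • y) + s • ((t : R) • z + s • y)
        = (t : R) • ((t : R) • x + s • z) + s • ((r : R) • y) := by
  intro und ov x y z
  exact ⟨birack_first_exchange hs x y z, birack_first_exchange hs x y z⟩
end

section
/- Let X = {1,2,3,4} with binary operations given by the tables (rows indexed by x, columns by y): x◁y with rows (2,4,2,4), (1,3,1,3), (4,2,4,2), (3,1,3,1), and x▷y with rows (4,2,4,2), (3,1,3,1), (2,4,2,4), (1,3,1,3). Then (X, ◁, ▷) is a framed birack: it satisfies (i) (x◁x)▷(x▷x) = (x▷x)◁(x◁x) for all x; (ii) for each x the maps y ↦ y▷x and y ↦ y◁x are bijections of X and the map S(x,y) = (y▷x, x◁y) is a bijection of X×X; and (iii) the three exchange laws (x◁y)◁(z◁y) = (x◁z)◁(y▷z), (x◁y)▷(z◁y) = (x▷z)◁(y▷z), (x▷y)▷(z▷y) = (x▷z)▷(y◁z)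 for all x,y,z ∈ X. -/
/-!
Both tables are affine over `ℤ/4`: `x ◁ y = 1 - x + 2y` and `x ▷ y = 3 - x + 2y`.
For operations `x ◁ y = a - x + ty`, `x ▷ y = b - x + ty` over a commutative ring, each axiom
reduces to a linear identity whose defect is a combination of `t²`, `t(a - b)` and `2(a - b)`,
and `t = 2`, `a = 1`, `b = 3` kill all three in `ℤ/4`.
-/

structure IsFramedBirack {X : Type*} (und ov : X → X → X) : Prop where
  framing : ∀ x, ov (und x x) (ov x x) = und (ov x x) (und x x)
  bijective_ov_left : ∀ x, Function.Bijective (fun y => ov y x)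
  bijective_und_left : ∀ x, Function.Bijective (fun y => und y x)
  bijective_switch : Function.Bijective (fun p : X × X => (ov p.2 p.1, und p.1 p.2))
  und_und : ∀ x y z, und (und x y) (und z y) = und (und x z) (ov y z)
  ov_und : ∀ x y z, ov (und x y) (und z y) = und (ov x z) (ov y z)
  ov_ov : ∀ x y z, ov (ov x y) (ov z y) = ov (ov x z) (und y z)

namespace IsFramedBirack

variable {R : Type*} [CommRing R] {t a b : R}

theorem bijective_sub_add_mul (a t x : R) : Function.Bijective (fun y => a - y + t * x) :=
  Function.Involutive.bijective fun y => by ring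

/-- The linear part `(x, y) ↦ (tx - y, ty - x)` has determinant `t² - 1 = -1`. -/
theorem bijective_affine_switch (ht : t * t = 0) :
    Function.Bijective (fun p : R × R => (b - p.2 + t * p.1, a - p.1 + t * p.2)) := by
  rw [Function.bijective_iff_has_inverse]
  let y (q : R × R) := b + t * a - t * q.2 - q.1
  refine ⟨fun q => (a - q.2 + t * y q, y q), fun p => ?_, fun q => ?_⟩
  · ext
    · linear_combination (-t * p.2) * ht
    · linear_combination (-p.2) * ht
  · ext
    · linear_combination y q * ht
    · ring

theorem affine (ht : t * t = 0) (hta : t * a = t * b) (h2 : 2 * a = 2 * b) :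
    IsFramedBirack (fun x y => a - x + t * y) (fun x y => b - x + t * y) where
  framing x := by linear_combination -h2 - hta
  bijective_ov_left x := bijective_sub_add_mul b t x
  bijective_und_left x := bijective_sub_add_mul a t x
  bijective_switch := bijective_affine_switch ht
  und_und x y z := by linear_combination (y - z) * ht + hta
  ov_und x y z := by linear_combination (y - z) * ht + hta - h2
  ov_ov x y z := by linear_combination (y - z) * ht - hta

end IsFramedBirack

/-- We model `X = {1,2,3,4}` as `Fin 4` (the numeral `4` denotes the element `0`, so
the numerals `1, 2, 3, 4` enumerate all of `Fin 4`). -/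
theorem statement16 (und ov : Fin 4 → Fin 4 → Fin 4)
    (hu11 : und 1 1 = 2) (hu12 : und 1 2 = 4) (hu13 : und 1 3 = 2) (hu14 : und 1 4 = 4)
    (hu21 : und 2 1 = 1) (hu22 : und 2 2 = 3) (hu23 : und 2 3 = 1) (hu24 : und 2 4 = 3)
    (hu31 : und 3 1 = 4) (hu32 : und 3 2 = 2) (hu33 : und 3 3 = 4) (hu34 : und 3 4 = 2)
    (hu41 : und 4 1 = 3) (hu42 : und 4 2 = 1) (hu43 : und 4 3 = 3) (hu44 : und 4 4 = 1)
    (ho11 : ov 1 1 = 4) (ho12 : ov 1 2 = 2) (ho13 : ov 1 3 = 4) (ho14 : ov 1 4 = 2)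
    (ho21 : ov 2 1 = 3) (ho22 : ov 2 2 = 1) (ho23 : ov 2 3 = 3) (ho24 : ov 2 4 = 1)
    (ho31 : ov 3 1 = 2) (ho32 : ov 3 2 = 4) (ho33 : ov 3 3 = 2) (ho34 : ov 3 4 = 4)
    (ho41 : ov 4 1 = 1) (ho42 : ov 4 2 = 3) (ho43 : ov 4 3 = 1) (ho44 : ov 4 4 = 3) :
    -- (i)
    (∀ x, ov (und x x) (ov x x) = und (ov x x) (und x x)) ∧
    -- (ii)
    (∀ x, Function.Bijective (fun y => ov y x)) ∧
    (∀ x, Function.Bijective (fun y => und y x)) ∧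
    Function.Bijective (fun p : Fin 4 × Fin 4 => (ov p.2 p.1, und p.1 p.2)) ∧
    -- (iii) exchange laws
    (∀ x y z, und (und x y) (und z y) = und (und x z) (ov y z)) ∧
    (∀ x y z, ov (und x y) (und z y) = und (ov x z) (ov y z)) ∧
    (∀ x y z, ov (ov x y) (ov z y) = ov (ov x z) (und y z)) := by
  open Fin.CommRing in
  have hund : und = fun x y => 1 - x + 2 * y := by
    funext x y
    fin_cases x <;> fin_cases y <;> assumption
  have hov : ov = fun x y => 3 - x + 2 * y := by
    funext x y
    fin_cases x <;> fin_cases y <;> assumption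
  have h : IsFramedBirack und ov :=
    hund ▸ hov ▸ IsFramedBirack.affine (by decide) (by decide) (by decide)
  exact ⟨h.framing, h.bijective_ov_left, h.bijective_und_left, h.bijective_switch,
    h.und_und, h.ov_und, h.ov_ov⟩
end
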